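/- The function β ↦ λ₁(β,−1) is continuous on [0,∞), where λ₁(β,−1) = inf { ∫_{−1}^1 (|φ'|² − (β/(y+1))|φ|²) dy : φ ∈ H₀¹(−1,1), ‖φ‖_{L²} = 1 }. -/

import Mathlib

/-!
Writing `A(φ) = ∫ φ'²` and `B(φ) = ∫ φ²/(y+1) ≥ 0`, the number `λ₁(β,-1)` is the infimum over
admissible `φ` of the affine functions `β ↦ A(φ) - β B(φ)`. Since `φ(-1) = 0`, Cauchy–Schwarz gives
`φ(y)² ≤ (y+1) A(φ)`, so splitting `(-1,1)` at `-1 + δ` yields the Hardy-type bound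
`B(φ) ≤ δ A(φ) + 1/δ`. Hence the infimum is finite for every real `β`, and an infimum of affine
functions that is finite everywhere is concave, hence continuous, on `ℝ`.
-/

open MeasureTheory Real Set Filter

/-- The set of values of the Rayleigh–Kuo quadratic form
`∫_{-1}^1 (|φ'|² - (β/(y-c))|φ|²) dy` over `L²`-normalized `φ ∈ H₀¹(-1,1)`. -/
noncomputable def rayleighSet (β c : ℝ) : Set ℝ :=
  { r | ∃ φ dφ : ℝ → ℝ,
      (∀ y, HasDerivAt φ (dφ y) y) ∧ φ (-1) = 0 ∧ φ 1 = 0 ∧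
      IntervalIntegrable (fun y => dφ y ^ 2) volume (-1) 1 ∧
      IntervalIntegrable (fun y => β / (y - c) * φ y ^ 2) volume (-1) 1 ∧
      (∫ y in (-1:ℝ)..1, φ y ^ 2) = 1 ∧
      r = ∫ y in (-1:ℝ)..1, (dφ y ^ 2 - β / (y - c) * φ y ^ 2) }

/-- The principal eigenvalue `λ₁(β,c)` of the Rayleigh–Kuo boundary value problem,
defined variationally as the infimum of the quadratic form. -/
noncomputable def lambda1 (β c : ℝ) : ℝ := sInf (rayleighSet β c)

lemma sq_intervalIntegral_le_mul_integral_sq {f : ℝ → ℝ} {a b : ℝ} (hab : a ≤ b)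
    (hf : IntervalIntegrable f volume a b)
    (hf2 : IntervalIntegrable (fun x => f x ^ 2) volume a b) :
    (∫ x in a..b, f x) ^ 2 ≤ (b - a) * ∫ x in a..b, f x ^ 2 := by
  rcases hab.eq_or_lt with rfl | hlt
  · simp
  have hL : b - a ≠ 0 := (sub_pos.2 hlt).ne'
  have hJensen := (even_two.convexOn_pow (𝕜 := ℝ)).map_set_average_le
    (continuous_pow 2).continuousOn isClosed_univ (μ := volume) (t := uIoc a b)
    (by simp [hL]) (by simp) (by simp) hf.def' hf2.def'
  rw [interval_average_eq, interval_average_eq, smul_eq_mul, smul_eq_mul, mul_pow] at hJensen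
  have := mul_le_mul_of_nonneg_left hJensen (sq_nonneg (b - a))
  field_simp at this
  linarith

lemma IntervalIntegrable.of_sq {f : ℝ → ℝ} {a b : ℝ} (hf : AEStronglyMeasurable f volume)
    (h : IntervalIntegrable (fun x => f x ^ 2) volume a b) : IntervalIntegrable f volume a b := by
  have : IsFiniteMeasure (volume.restrict (uIoc a b)) :=
    isFiniteMeasure_restrict.2 measure_Ioc_lt_top.ne
  exact intervalIntegrable_iff.2 <|
    ((memLp_two_iff_integrable_sq hf.restrict).2 h.def').integrable one_le_two

section HardyInequality

variable {φ dφ : ℝ → ℝ} {a b : ℝ}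

lemma sq_le_sub_mul_integral_deriv_sq (hφ : ∀ x, HasDerivAt φ (dφ x) x) (ha : φ a = 0)
    (hd : IntervalIntegrable (fun x => dφ x ^ 2) volume a b) {y : ℝ} (hy : y ∈ Icc a b) :
    φ y ^ 2 ≤ (y - a) * ∫ x in a..b, dφ x ^ 2 := by
  have hd_ay : IntervalIntegrable (fun x => dφ x ^ 2) volume a y :=
    hd.mono_set (uIcc_subset_uIcc_left (mem_uIcc_of_le hy.1 hy.2))
  have hmeas : Measurable dφ := by
    rw [show dφ = deriv φ from funext fun x => (hφ x).deriv.symm]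
    exact measurable_deriv φ
  have hint : IntervalIntegrable dφ volume a y := hd_ay.of_sq hmeas.aestronglyMeasurable
  have hftc : φ y = ∫ x in a..y, dφ x := by
    rw [intervalIntegral.integral_eq_sub_of_hasDerivAt (fun x _ => hφ x) hint, ha, sub_zero]
  have hmono : ∫ x in a..y, dφ x ^ 2 ≤ ∫ x in a..b, dφ x ^ 2 :=
    intervalIntegral.integral_mono_interval le_rfl hy.1 hy.2
      (Eventually.of_forall fun x => sq_nonneg _) hd
  calc φ y ^ 2 ≤ (y - a) * ∫ x in a..y, dφ x ^ 2 := by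
        rw [hftc]; exact sq_intervalIntegral_le_mul_integral_sq hy.1 hint hd_ay
    _ ≤ (y - a) * ∫ x in a..b, dφ x ^ 2 :=
        mul_le_mul_of_nonneg_left hmono (sub_nonneg.2 hy.1)

lemma sq_div_sub_le_integral_deriv_sq (hφ : ∀ x, HasDerivAt φ (dφ x) x) (ha : φ a = 0)
    (hd : IntervalIntegrable (fun x => dφ x ^ 2) volume a b) {y : ℝ} (hy : y ∈ Icc a b) :
    φ y ^ 2 / (y - a) ≤ ∫ x in a..b, dφ x ^ 2 :=
  div_le_of_le_mul₀ (sub_nonneg.2 hy.1)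
    (intervalIntegral.integral_nonneg (hy.1.trans hy.2) fun _ _ => sq_nonneg _)
    (by rw [mul_comm]; exact sq_le_sub_mul_integral_deriv_sq hφ ha hd hy)

lemma intervalIntegrable_sq_div_sub (hab : a ≤ b) (hφ : ∀ x, HasDerivAt φ (dφ x) x)
    (ha : φ a = 0) (hd : IntervalIntegrable (fun x => dφ x ^ 2) volume a b) :
    IntervalIntegrable (fun x => φ x ^ 2 / (x - a)) volume a b := by
  have hcont : Continuous φ := continuous_iff_continuousAt.2 fun x => (hφ x).continuousAt
  refine IntervalIntegrable.mono_fun' (g := fun _ => ∫ x in a..b, dφ x ^ 2)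
    intervalIntegrable_const
    (((hcont.pow 2).measurable.div (measurable_id.sub_const a)).aestronglyMeasurable) ?_
  rw [uIoc_of_le hab]
  refine (ae_restrict_iff' measurableSet_Ioc).2 (Eventually.of_forall fun y hy => ?_)
  dsimp only
  rw [Real.norm_eq_abs, abs_of_nonneg (div_nonneg (sq_nonneg _) (by linarith [hy.1]))]
  exact sq_div_sub_le_integral_deriv_sq hφ ha hd (Ioc_subset_Icc_self hy)

/-- Near `a` the integrand is bounded by `∫ φ'²`, away from `a` by `φ² / δ`. -/
lemma integral_sq_div_sub_le (hφ : ∀ x, HasDerivAt φ (dφ x) x) (ha : φ a = 0)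
    (hd : IntervalIntegrable (fun x => dφ x ^ 2) volume a b) {δ : ℝ} (hδ : 0 < δ)
    (hδb : δ ≤ b - a) :
    ∫ x in a..b, φ x ^ 2 / (x - a) ≤
      δ * (∫ x in a..b, dφ x ^ 2) + (∫ x in a..b, φ x ^ 2) / δ := by
  set c := a + δ
  have hac : a ≤ c := by linarith
  have hcb : c ≤ b := by linarith
  have hint := intervalIntegrable_sq_div_sub (hac.trans hcb) hφ ha hd
  have hint_ac := hint.mono_set (uIcc_subset_uIcc_left (mem_uIcc_of_le hac hcb))
  have hint_cb := hint.mono_set (uIcc_subset_uIcc_right (mem_uIcc_of_le hac hcb))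
  have hcont : Continuous φ := continuous_iff_continuousAt.2 fun x => (hφ x).continuousAt
  have hsq : IntervalIntegrable (fun x => φ x ^ 2) volume c b :=
    (hcont.pow 2).intervalIntegrable _ _
  have hnear : ∫ x in a..c, φ x ^ 2 / (x - a) ≤ δ * ∫ x in a..b, dφ x ^ 2 := by
    refine (intervalIntegral.integral_mono_on hac hint_ac intervalIntegrable_const
      fun y hy => sq_div_sub_le_integral_deriv_sq hφ ha hd ⟨hy.1, hy.2.trans hcb⟩).trans_eq ?_
    rw [intervalIntegral.integral_const, smul_eq_mul]
    ring
  have hfar : ∫ x in c..b, φ x ^ 2 / (x - a) ≤ (∫ x in a..b, φ x ^ 2) / δ := by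
    calc ∫ x in c..b, φ x ^ 2 / (x - a) ≤ ∫ x in c..b, φ x ^ 2 / δ :=
          intervalIntegral.integral_mono_on hcb hint_cb (hsq.div_const δ)
            fun y hy => div_le_div_of_nonneg_left (sq_nonneg _) hδ (by linarith [hy.1])
      _ = (∫ x in c..b, φ x ^ 2) / δ := intervalIntegral.integral_div _ _
      _ ≤ (∫ x in a..b, φ x ^ 2) / δ := by
          gcongr
          exact intervalIntegral.integral_mono_interval hac hcb le_rfl
            (Eventually.of_forall fun x => sq_nonneg _) ((hcont.pow 2).intervalIntegrable _ _)
  rw [← intervalIntegral.integral_add_adjacent_intervals hint_ac hint_cb]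
  linarith

end HardyInequality

structure IsAdmissible (φ dφ : ℝ → ℝ) : Prop where
  hasDerivAt : ∀ y, HasDerivAt φ (dφ y) y
  apply_neg_one : φ (-1) = 0
  apply_one : φ 1 = 0
  intervalIntegrable_deriv_sq : IntervalIntegrable (fun y => dφ y ^ 2) volume (-1) 1
  integral_sq : ∫ y in (-1:ℝ)..1, φ y ^ 2 = 1

noncomputable def dirichletEnergy (dφ : ℝ → ℝ) : ℝ := ∫ y in (-1:ℝ)..1, dφ y ^ 2

noncomputable def hardyIntegral (φ : ℝ → ℝ) : ℝ := ∫ y in (-1:ℝ)..1, φ y ^ 2 / (y + 1)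

lemma dirichletEnergy_nonneg (dφ : ℝ → ℝ) : 0 ≤ dirichletEnergy dφ :=
  intervalIntegral.integral_nonneg (by norm_num) fun _ _ => sq_nonneg _

lemma hardyIntegral_nonneg (φ : ℝ → ℝ) : 0 ≤ hardyIntegral φ :=
  intervalIntegral.integral_nonneg (by norm_num) fun _ hy =>
    div_nonneg (sq_nonneg _) (by linarith [hy.1])

namespace IsAdmissible

variable {φ dφ : ℝ → ℝ}

lemma intervalIntegrable_sq_div (h : IsAdmissible φ dφ) :
    IntervalIntegrable (fun y => φ y ^ 2 / (y + 1)) volume (-1) 1 := by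
  simpa only [sub_neg_eq_add] using intervalIntegrable_sq_div_sub (by norm_num)
    h.hasDerivAt h.apply_neg_one h.intervalIntegrable_deriv_sq

lemma hardyIntegral_le (h : IsAdmissible φ dφ) {δ : ℝ} (hδ : 0 < δ) (hδ2 : δ ≤ 2) :
    hardyIntegral φ ≤ δ * dirichletEnergy dφ + 1 / δ := by
  have := integral_sq_div_sub_le h.hasDerivAt h.apply_neg_one h.intervalIntegrable_deriv_sq hδ
    (by norm_num [hδ2])
  simpa only [hardyIntegral, dirichletEnergy, sub_neg_eq_add, h.integral_sq] using this

lemma neg_le_dirichletEnergy_sub (h : IsAdmissible φ dφ) (β : ℝ) :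
    -(|β| * (|β| + 1)) ≤ dirichletEnergy dφ - β * hardyIntegral φ := by
  have hβ : 0 < |β| + 1 := by positivity
  have hδ1 : 1 / (|β| + 1) ≤ 1 := (div_le_one hβ).2 (by linarith [abs_nonneg β])
  have hB := h.hardyIntegral_le (by positivity) (hδ1.trans one_le_two)
  have hA := dirichletEnergy_nonneg dφ
  have hβB : β * hardyIntegral φ ≤ |β| * hardyIntegral φ :=
    mul_le_mul_of_nonneg_right (le_abs_self β) (hardyIntegral_nonneg φ)
  have hβB' := mul_le_mul_of_nonneg_left hB (abs_nonneg β)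
  rw [one_div_one_div, mul_add] at hβB'
  have hβA : |β| * (1 / (|β| + 1) * dirichletEnergy dφ) ≤ dirichletEnergy dφ := by
    rw [← mul_assoc, mul_one_div]
    exact mul_le_of_le_one_left hA ((div_le_one hβ).2 (by linarith))
  linarith

end IsAdmissible

lemma mem_rayleighSet_neg_one_iff {β r : ℝ} :
    r ∈ rayleighSet β (-1) ↔
      ∃ φ dφ, IsAdmissible φ dφ ∧ r = dirichletEnergy dφ - β * hardyIntegral φ := by
  have hpot (φ : ℝ → ℝ) :
      (fun y => β / (y - -1) * φ y ^ 2) = fun y => β * (φ y ^ 2 / (y + 1)) := by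
    funext y; rw [sub_neg_eq_add]; ring
  constructor
  · rintro ⟨φ, dφ, hφ, hleft, hright, hd, hV, hnorm, rfl⟩
    refine ⟨φ, dφ, ⟨hφ, hleft, hright, hd, hnorm⟩, ?_⟩
    rw [intervalIntegral.integral_sub hd hV, hpot, intervalIntegral.integral_const_mul]
    rfl
  · rintro ⟨φ, dφ, h, rfl⟩
    have hV : IntervalIntegrable (fun y => β / (y - -1) * φ y ^ 2) volume (-1) 1 := by
      rw [hpot]; exact h.intervalIntegrable_sq_div.const_mul β
    refine ⟨φ, dφ, h.hasDerivAt, h.apply_neg_one, h.apply_one, h.intervalIntegrable_deriv_sq, hV,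
      h.integral_sq, ?_⟩
    rw [intervalIntegral.integral_sub h.intervalIntegrable_deriv_sq hV, hpot,
      intervalIntegral.integral_const_mul]
    rfl

lemma isAdmissible_parabola :
    IsAdmissible (fun y => √15 / 4 * (1 - y ^ 2)) (fun y => √15 / 4 * -(2 * y)) where
  hasDerivAt y := by
    simpa using ((hasDerivAt_pow 2 y).const_sub 1).const_mul (√15 / 4)
  apply_neg_one := by norm_num
  apply_one := by norm_num
  intervalIntegrable_deriv_sq := Continuous.intervalIntegrable (by fun_prop) _ _
  integral_sq := by
    have hsq : √15 ^ 2 = 15 := Real.sq_sqrt (by norm_num)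
    have hexpand : (fun y : ℝ => (√15 / 4 * (1 - y ^ 2)) ^ 2) =
        fun y => 15 / 16 * (1 - 2 * y ^ 2 + y ^ 4) := by
      funext y; rw [mul_pow, div_pow, hsq]; ring
    rw [hexpand, intervalIntegral.integral_const_mul, intervalIntegral.integral_add,
      intervalIntegral.integral_sub, intervalIntegral.integral_const_mul]
    · norm_num
    all_goals exact Continuous.intervalIntegrable (by fun_prop) _ _

lemma rayleighSet_neg_one_nonempty (β : ℝ) : (rayleighSet β (-1)).Nonempty :=
  ⟨_, mem_rayleighSet_neg_one_iff.2 ⟨_, _, isAdmissible_parabola, rfl⟩⟩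

lemma bddBelow_rayleighSet_neg_one (β : ℝ) : BddBelow (rayleighSet β (-1)) := by
  refine ⟨-(|β| * (|β| + 1)), fun r hr => ?_⟩
  obtain ⟨φ, dφ, h, rfl⟩ := mem_rayleighSet_neg_one_iff.1 hr
  exact h.neg_le_dirichletEnergy_sub β

lemma IsAdmissible.lambda1_le {φ dφ : ℝ → ℝ} (h : IsAdmissible φ dφ) (β : ℝ) :
    lambda1 β (-1) ≤ dirichletEnergy dφ - β * hardyIntegral φ :=
  csInf_le (bddBelow_rayleighSet_neg_one β) (mem_rayleighSet_neg_one_iff.2 ⟨φ, dφ, h, rfl⟩)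

lemma le_lambda1 {β m : ℝ}
    (h : ∀ φ dφ, IsAdmissible φ dφ → m ≤ dirichletEnergy dφ - β * hardyIntegral φ) :
    m ≤ lambda1 β (-1) :=
  le_csInf (rayleighSet_neg_one_nonempty β) fun r hr => by
    obtain ⟨φ, dφ, hφ, rfl⟩ := mem_rayleighSet_neg_one_iff.1 hr
    exact h φ dφ hφ

lemma concaveOn_lambda1 : ConcaveOn ℝ univ fun β => lambda1 β (-1) := by
  refine ⟨convex_univ, fun x _ y _ a b ha hb hab => le_lambda1 fun φ dφ h => ?_⟩
  have hx := mul_le_mul_of_nonneg_left (h.lambda1_le x) ha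
  have hy := mul_le_mul_of_nonneg_left (h.lambda1_le y) hb
  have hsplit : dirichletEnergy dφ - (a • x + b • y) * hardyIntegral φ =
      a * (dirichletEnergy dφ - x * hardyIntegral φ) +
        b * (dirichletEnergy dφ - y * hardyIntegral φ) := by
    rw [smul_eq_mul, smul_eq_mul]
    linear_combination (-dirichletEnergy dφ) * hab
  rw [hsplit, smul_eq_mul, smul_eq_mul]
  linarith

/-- `β ↦ λ₁(β,-1)` is continuous on `[0,∞)`. -/
theorem lambda1_continuousOn_beta :
    ContinuousOn (fun β => lambda1 β (-1)) (Set.Ici 0) :=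
  (concaveOn_lambda1.continuousOn isOpen_univ).mono (subset_univ _)
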